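/- Let A be a ∗-ring with h⁻(A) = 0 and let μ ∈ A be a self-dual element which is not a zero divisor. Suppose that the annihilator of [μ] in h⁺(A) equals the principal ideal h⁺(A)·[μ] (so in particular [μ]² = 0). Let u ∈ A be any element with u + u∗ = μ². Then h⁺(A/μA) ≅ h⁺(A)/([μ]), and h⁻(A/μA) is a free module of rank 1 over h⁺(A)/([μ]) generated by the class [ū] of u; in particular h⁺(A/μA) ⊕ h⁻(A/μA) is a free h⁺(A)/([μ])-module of rank 2. -/
import Mathlib


/-- Let `A` be a commutative ∗-ring with `h⁻(A) = 0`, let `μ ∈ A` be self-dual and not a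
zero divisor, and suppose the annihilator of `[μ]` in `h⁺(A)` equals the principal ideal
`h⁺(A)·[μ]` (expressed below as an `iff`).  Let `u ∈ A` with `u + u∗ = μ²`.  Then:
(1) `h⁺(A/μA) ≅ h⁺(A)/([μ])` via the quotient map (surjectivity and injectivity below);
(2) `h⁻(A/μA)` is a free `h⁺(A)/([μ])`-module of rank 1 generated by `[ū]`:
(generation) every `a ∈ A` that is anti-self-dual mod `(μ)` is, modulo `(μ)` and the image
of `id − ∗`, of the form `c·u` with `c` self-dual; (freeness) if `c` is self-dual and
`c·u` is trivial in `h⁻(A/μA)`, then `[c] ∈ ([μ]) ⊆ h⁺(A)`.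
In particular `h⁺(A/μA) ⊕ h⁻(A/μA)` is a free `h⁺(A)/([μ])`-module of rank 2. -/
theorem stmt_3 {A : Type*} [CommRing A] [StarRing A]
    (hA : ∀ a : A, star a = -a → ∃ b : A, a = b - star b)
    (μ : A) (hμ : star μ = μ) (hreg : ∀ x : A, μ * x = 0 → x = 0)
    (hann : ∀ x : A, star x = x →
      ((∃ t : A, x * μ = t + star t) ↔
        ∃ c : A, star c = c ∧ ∃ t : A, x = c * μ + (t + star t)))
    (u : A) (hu : u + star u = μ ^ 2) :
    (∀ a : A, star a - a ∈ Ideal.span {μ} →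
      ∃ x : A, star x = x ∧ ∃ b : A, a - x - (b + star b) ∈ Ideal.span ({μ} : Set A)) ∧
    (∀ x : A, star x = x → (∃ b : A, x - (b + star b) ∈ Ideal.span ({μ} : Set A)) →
      ∃ c t : A, star c = c ∧ x = c * μ + (t + star t)) ∧
    (∀ a : A, star a + a ∈ Ideal.span {μ} →
      ∃ c : A, star c = c ∧ ∃ b : A, a - c * u - (b - star b) ∈ Ideal.span ({μ} : Set A)) ∧
    (∀ c : A, star c = c →
      (∃ b : A, c * u - (b - star b) ∈ Ideal.span ({μ} : Set A)) →
      ∃ d t : A, star d = d ∧ c = d * μ + (t + star t)) := by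
  have hspan : ∀ a : A, a ∈ Ideal.span ({μ} : Set A) ↔ ∃ y, a = μ * y := by
    intro a
    rw [Ideal.mem_span_singleton]
    exact ⟨fun ⟨y, hy⟩ => ⟨y, hy⟩, fun ⟨y, hy⟩ => ⟨y, hy⟩⟩
  refine ⟨?_, ?_, ?_, ?_⟩
  · -- surjectivity of h⁺(A)/([μ]) → h⁺(A/μA)
    intro a ha
    obtain ⟨y, hy⟩ := (hspan _).mp ha
    have hy' : a - star a = μ * star y := by
      have h := congrArg star hy
      simp only [star_sub, star_mul, star_star, hμ] at h
      linear_combination h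
    have h0 : μ * (y + star y) = 0 := by
      have : (star a - a) + (a - star a) = μ * y + μ * star y := by rw [← hy, ← hy']
      linear_combination -this
    have hys : star y = -y := by
      have := hreg _ h0
      linear_combination this
    obtain ⟨b, hb⟩ := hA y hys
    refine ⟨a + μ * b, ?_, 0, ?_⟩
    · have hsa : star a = a + μ * (b - star b) := by linear_combination hy + μ * hb
      rw [star_add, star_mul, hμ, hsa]; ring
    · refine (hspan _).mpr ⟨-b, by rw [star_zero]; ring⟩
  · -- injectivity
    intro x hx ⟨b, hb⟩
    obtain ⟨y, hy⟩ := (hspan _).mp hb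
    have hx' : x = b + star b + μ * y := by linear_combination hy
    have hy2 : x = star b + b + μ * star y := by
      have h := congrArg star hx'
      simp only [star_add, star_mul, star_star, hμ, hx] at h
      linear_combination h
    have hys : star y = y := by
      have h0 : μ * (y - star y) = 0 := by linear_combination hy2 - hx'
      have := hreg _ h0
      linear_combination -this
    exact ⟨y, b, hys, by rw [hx']; ring⟩
  · -- generation of h⁻(A/μA) by [ū]
    intro a ha
    obtain ⟨y, hy⟩ := (hspan _).mp ha
    have hy' : a + star a = μ * star y := by
      have h := congrArg star hy
      simp only [star_add, star_mul, star_star, hμ] at h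
      linear_combination h
    have hys : star y = y := by
      have h0 : μ * (y - star y) = 0 := by linear_combination hy' - hy
      have := hreg _ h0
      linear_combination -this
    obtain ⟨c, hc, t, ht⟩ := (hann y hys).mp ⟨a, by linear_combination -hy⟩
    -- w := a - c*u - μ*t is anti-self-dual
    have hw : star (a - c * u - μ * t) = -(a - c * u - μ * t) := by
      rw [star_sub, star_sub, star_mul, star_mul, hμ, hc]
      have h1 : a + star a = μ * y := by linear_combination hy
      have h2 : y = c * μ + (t + star t) := ht
      have h3 : u + star u = μ ^ 2 := hu
      linear_combination h1 + μ * h2 - c * h3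
    obtain ⟨b, hb⟩ := hA _ hw
    exact ⟨c, hc, b, (hspan _).mpr ⟨t, by linear_combination hb⟩⟩
  · -- freeness
    intro c hc ⟨b, hb⟩
    obtain ⟨y, hy⟩ := (hspan _).mp hb
    have hcu : c * u = b - star b + μ * y := by linear_combination hy
    have hcu' : c * star u = star b - b + μ * star y := by
      have h := congrArg star hcu
      simp only [star_sub, star_add, star_mul, star_star, hμ, hc] at h
      linear_combination h
    have key : c * μ = y + star y := by
      have h0 : μ * (c * μ - (y + star y)) = 0 := by
        linear_combination hcu + hcu' - c * hu
      have := hreg _ h0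
      linear_combination this
    obtain ⟨d, hd, t, ht⟩ := (hann c hc).mp ⟨y, key⟩
    exact ⟨d, t, hd, ht⟩
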